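/- arXiv:2201.11273 — 5 statements merged into one kernel-verified Lean document; each statement's English description precedes it below -/
import Mathlib

section
/- Let F : Y → X and F' : Y' → X be constructive functors on a category X, with Y nonempty and Y' a connected groupoid. Then any morphism of constructive functors Φ : F → F' (i.e., a functor Φ : Y → Y' with F' ∘ Φ = F) is surjective on objects and surjective on morphisms. -/
open CategoryTheory

universe v u v' u' v'' u''

/-- A functor `F : Y ⥤ X` is *constructive* if it is faithful and every isomorphism of `X`
with domain `F.obj a` lifts uniquely to an isomorphism of `Y` with domain `a`. -/
def Constructive {Y : Type u'} {X : Type u} [Category.{v'} Y] [Category.{v} X]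
    (F : Y ⥤ X) : Prop :=
  F.Faithful ∧
    ∀ (a : Y) (x : X) (u : F.obj a ⟶ x), IsIso u →
      ∃! p : Σ b : Y, a ⟶ b,
        IsIso p.2 ∧ ∃ h : F.obj p.1 = x, F.map p.2 = u ≫ eqToHom h.symm

lemma nonempty_hom_of_connected_groupoid {Y' : Type u''} [Groupoid.{v''} Y']
    [IsConnected Y'] (a b : Y') : Nonempty (a ⟶ b) :=
  Nonempty.map (fun x => x) <|
    isPreconnected_induction (fun j => (a ⟶ j))
      (fun f g => g ≫ f) (fun f g => g ≫ Groupoid.inv f) (𝟙 a) b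

/-- Key step: any iso out of `Φ.obj a` is in the image of `Φ` (up to `eqToHom`). -/
lemma key_lift {Y : Type u'} {Y' : Type u''} {X : Type u}
    [Category.{v'} Y] [Groupoid.{v''} Y'] [Category.{v} X]
    (F : Y ⥤ X) (F' : Y' ⥤ X) (hF : Constructive F) (hF' : Constructive F')
    (Φ : Y ⥤ Y') (hΦ : Φ ⋙ F' = F) (a : Y) (b' : Y') (v : Φ.obj a ⟶ b') :
    ∃ (b : Y) (u : a ⟶ b) (hb : Φ.obj b = b'),
      Φ.map u = v ≫ eqToHom hb.symm := by
  have e : F'.obj (Φ.obj a) = F.obj a := Functor.congr_obj hΦ a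
  have hiso : IsIso (eqToHom e.symm ≫ F'.map v) := by
    have : IsIso v := inferInstance
    infer_instance
  obtain ⟨⟨b, u⟩, ⟨hu, h, hmap⟩, -⟩ := hF.2 a (F'.obj b') (eqToHom e.symm ≫ F'.map v) hiso
  -- Now uniqueness in hF' applied to `F'.map v : F'.obj (Φ.obj a) ⟶ F'.obj b'`
  obtain ⟨p, -, huniq⟩ := hF'.2 (Φ.obj a) (F'.obj b') (F'.map v) inferInstance
  have h1 : (⟨b', v⟩ : Σ c : Y', Φ.obj a ⟶ c) = p := by
    refine huniq _ ⟨inferInstance, rfl, by simp⟩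
  have e2 : F'.obj (Φ.obj b) = F'.obj b' := (Functor.congr_obj hΦ b).trans h
  have h2 : (⟨Φ.obj b, Φ.map u⟩ : Σ c : Y', Φ.obj a ⟶ c) = p := by
    refine huniq _ ⟨inferInstance, e2, ?_⟩
    have := Functor.congr_hom hΦ u
    rw [Functor.comp_map] at this
    rw [this, hmap]
    simp
  have h3 := h2.trans h1.symm
  obtain ⟨hb, hheq⟩ := Sigma.ext_iff.mp h3
  dsimp only at hb hheq
  refine ⟨b, u, hb, ?_⟩
  subst hb
  exact (eq_of_heq hheq).trans (by simp)

/-- If `F : Y ⥤ X`, `F' : Y' ⥤ X` are constructive with `Y` nonempty and `Y'` a connected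
groupoid, then any morphism of constructive functors `Φ : F → F'` (a functor over `X`) is
surjective on objects and on morphisms. -/
theorem stmt2 {Y : Type u'} {Y' : Type u''} {X : Type u}
    [Category.{v'} Y] [Groupoid.{v''} Y'] [Category.{v} X]
    (F : Y ⥤ X) (F' : Y' ⥤ X) (hF : Constructive F) (hF' : Constructive F')
    (hY : Nonempty Y) (hY' : IsConnected Y')
    (Φ : Y ⥤ Y') (hΦ : Φ ⋙ F' = F) :
    Function.Surjective Φ.obj ∧
      ∀ (a' b' : Y') (v : a' ⟶ b'),
        ∃ (a b : Y) (u : a ⟶ b) (ha : Φ.obj a = a') (hb : Φ.obj b = b'),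
          Φ.map u = eqToHom ha ≫ v ≫ eqToHom hb.symm := by
  obtain ⟨a₀⟩ := hY
  have surj : Function.Surjective Φ.obj := by
    intro b'
    obtain ⟨v⟩ := _root_.nonempty_hom_of_connected_groupoid (Φ.obj a₀) b'
    obtain ⟨b, u, hb, -⟩ := key_lift F F' hF hF' Φ hΦ a₀ b' v
    exact ⟨b, hb⟩
  refine ⟨surj, fun a' b' v => ?_⟩
  obtain ⟨a, ha⟩ := surj a'
  obtain ⟨b, u, hb, hu⟩ := key_lift F F' hF hF' Φ hΦ a b' (eqToHom ha ≫ v)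
  exact ⟨a, b, u, ha, hb, by rw [hu]; simp⟩
end

section
/- Let G be a connected groupoid, e an object of G, and F : Y → G a constructive functor on G. Denote by F⁻¹(e) the set of objects a of Y with F(a) = e. Then the evaluation map ev_{F,e} : Mor(F_{G,e}, F) → F⁻¹(e), sending a morphism of constructive functors Φ : Y_{G,e} → Y (over G) to Φ((e, id_e)), is a bijection. -/
/-!
`(e, 𝟙 e)` is an initial object of the groupoid `Y_{G,e}`, so every morphism `p ⟶ q` is the
inverse of the arrow `(e, 𝟙 e) ⟶ p` followed by the arrow `(e, 𝟙 e) ⟶ q`. A functor `Φ` over `G`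
with `Φ(e, 𝟙 e) = a₀` is therefore determined by the images of these arrows, which are
isomorphisms starting at `a₀` lying over the `p.up`. Lifts are unique, so there is at most one
such `Φ`; conversely, choosing a lift of each `p.up` defines one.
-/

open CategoryTheory

universe v u v' u'

/-- The category `Y_{G,e}`: objects are pairs `(a, u : e ⟶ a)`, morphisms
`(a,u) ⟶ (a',u')` are morphisms `v : a ⟶ a'` of `G` with `u ≫ v = u'`
(i.e. `u' = v ∘ u`). -/
structure YObj {G : Type u} [Groupoid.{v} G] (e : G) : Type (max u v) where
  pt : G
  up : e ⟶ pt

instance {G : Type u} [Groupoid.{v} G] (e : G) : Category.{v} (YObj e) where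
  Hom p q := { v : p.pt ⟶ q.pt // p.up ≫ v = q.up }
  id p := ⟨𝟙 _, Category.comp_id _⟩
  comp f g := ⟨f.1 ≫ g.1, by rw [← Category.assoc, f.2, g.2]⟩
  id_comp f := Subtype.ext (Category.id_comp _)
  comp_id f := Subtype.ext (Category.comp_id _)
  assoc f g h := Subtype.ext (Category.assoc _ _ _)

/-- The forgetful (universal covering) functor `F_{G,e} : Y_{G,e} ⥤ G`. -/
def FGe {G : Type u} [Groupoid.{v} G] (e : G) : YObj e ⥤ G where
  obj p := p.pt
  map f := f.1
  map_id _ := rfl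
  map_comp _ _ := rfl

namespace YObj

variable {G : Type u} [Groupoid.{v} G] {e : G}

instance : Groupoid.{v} (YObj e) where
  inv f := ⟨Groupoid.inv f.1, by rw [Groupoid.inv_eq_inv, IsIso.comp_inv_eq, f.2]⟩
  inv_comp f := Subtype.ext (Groupoid.inv_comp _)
  comp_inv f := Subtype.ext (Groupoid.comp_inv _)

variable (e) in
abbrev base : YObj e := ⟨e, 𝟙 e⟩

def fromBase (p : YObj e) : base e ⟶ p := ⟨p.up, Category.id_comp _⟩

theorem fromBase_comp {p q : YObj e} (f : p ⟶ q) : fromBase p ≫ f = fromBase q :=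
  Subtype.ext f.2

theorem eq_inv_fromBase_comp {p q : YObj e} (f : p ⟶ q) : f = inv (fromBase p) ≫ fromBase q := by
  rw [IsIso.eq_inv_comp, fromBase_comp]

theorem functor_ext {C : Type u'} [Category.{v'} C] {Φ Ψ : YObj e ⥤ C}
    (hobj : ∀ p, Φ.obj p = Ψ.obj p)
    (hmap : ∀ p,
      Φ.map (fromBase p) = eqToHom (hobj _) ≫ Ψ.map (fromBase p) ≫ eqToHom (hobj p).symm) :
    Φ = Ψ := by
  refine CategoryTheory.Functor.ext hobj fun p q f => ?_
  rw [eq_inv_fromBase_comp f, Φ.map_comp, Ψ.map_comp, Φ.map_inv, Ψ.map_inv, IsIso.inv_comp_eq,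
    hmap p, hmap q]
  simp

end YObj

section IsoLift

variable {Y : Type u'} {X : Type u} [Category.{v'} Y] [Category.{v} X] (F : Y ⥤ X)

def IsIsoLift {a b : Y} {x : X} (u : F.obj a ⟶ x) (g : a ⟶ b) : Prop :=
  IsIso g ∧ ∃ h : F.obj b = x, F.map g = u ≫ eqToHom h.symm

def UniqueIsoLifting : Prop :=
  ∀ (a : Y) (x : X) (u : F.obj a ⟶ x), IsIso u →
    ∃! p : Σ b : Y, a ⟶ b, IsIsoLift F u p.2

variable {F}

theorem Constructive.uniqueIsoLifting (hF : Constructive F) : UniqueIsoLifting F :=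
  hF.2

theorem UniqueIsoLifting.isIsoLift_unique (hF : UniqueIsoLifting F) {a b b' : Y} {x : X}
    (u : F.obj a ⟶ x) [IsIso u] {g : a ⟶ b} {g' : a ⟶ b'}
    (hg : IsIsoLift F u g) (hg' : IsIsoLift F u g') :
    ∃ hb : b = b', g ≫ eqToHom hb = g' := by
  obtain ⟨rfl, hgg'⟩ := Sigma.mk.inj_iff.mp
    ((hF a x u inferInstance).unique (y₁ := ⟨b, g⟩) (y₂ := ⟨b', g'⟩) hg hg')
  exact ⟨rfl, by simpa using eq_of_heq hgg'⟩

end IsoLift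

namespace YObj

variable {G : Type u} [Groupoid.{v} G] {e : G} {Y : Type u'} [Category.{v'} Y] {F : Y ⥤ G}

theorem isIsoLift_map_fromBase {Θ : YObj e ⥤ Y} (hΘ : Θ ⋙ F = FGe e) {a₀ : Y}
    (h0 : Θ.obj (base e) = a₀) (ha : F.obj a₀ = e) (p : YObj e) :
    IsIsoLift F (eqToHom ha ≫ p.up) (eqToHom h0.symm ≫ Θ.map (fromBase p)) := by
  refine ⟨inferInstance, congrArg (fun H : YObj e ⥤ G => H.obj p) hΘ, ?_⟩
  have hmap := Functor.congr_hom hΘ (fromBase p)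
  rw [Functor.comp_map] at hmap
  rw [F.map_comp, eqToHom_map, hmap]
  simp only [FGe, fromBase, Category.assoc]
  exact eqToHom_trans_assoc _ _ _

theorem eq_of_obj_base_eq (hF : UniqueIsoLifting F) {Φ Ψ : YObj e ⥤ Y} (hΦ : Φ ⋙ F = FGe e)
    (hΨ : Ψ ⋙ F = FGe e) (h : Φ.obj (base e) = Ψ.obj (base e)) : Φ = Ψ := by
  have ha := congrArg (fun H : YObj e ⥤ G => H.obj (base e)) hΦ
  have lifts (p : YObj e) : ∃ hp : Φ.obj p = Ψ.obj p,
      (eqToHom rfl ≫ Φ.map (fromBase p)) ≫ eqToHom hp = eqToHom h ≫ Ψ.map (fromBase p) :=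
    hF.isIsoLift_unique _ (isIsoLift_map_fromBase hΦ rfl ha p)
      (isIsoLift_map_fromBase hΨ h.symm ha p)
  choose hobj hmap using lifts
  refine functor_ext hobj fun p => ?_
  rw [← Category.assoc, ← hmap p]
  simp

variable (hF : UniqueIsoLifting F) {a₀ : Y} (ha : F.obj a₀ = e)

noncomputable def chosenLift (p : YObj e) : Σ b : Y, a₀ ⟶ b :=
  (hF a₀ p.pt (eqToHom ha ≫ p.up) inferInstance).exists.choose

theorem isIsoLift_chosenLift (p : YObj e) :
    IsIsoLift F (eqToHom ha ≫ p.up) (chosenLift hF ha p).2 :=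
  (hF a₀ p.pt (eqToHom ha ≫ p.up) inferInstance).exists.choose_spec

instance (p : YObj e) : IsIso (chosenLift hF ha p).2 :=
  (isIsoLift_chosenLift hF ha p).1

/-- `Y_{G,e}` has at most one morphism `p ⟶ q`, so its image need not depend on it. -/
noncomputable def liftFunctor : YObj e ⥤ Y where
  obj p := (chosenLift hF ha p).1
  map {p q} _ := inv (chosenLift hF ha p).2 ≫ (chosenLift hF ha q).2

theorem liftFunctor_comp_eq : liftFunctor hF ha ⋙ F = FGe e := by
  choose hobj hmap using fun p => (isIsoLift_chosenLift hF ha p).2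
  refine CategoryTheory.Functor.ext hobj fun p q f => ?_
  dsimp only [Functor.comp_map, liftFunctor]
  rw [F.map_comp, F.map_inv, IsIso.inv_comp_eq, hmap p, hmap q]
  simp [FGe, ← f.2]

theorem liftFunctor_obj_base : (liftFunctor hF ha).obj (base e) = a₀ := by
  have hid : IsIsoLift F (eqToHom ha ≫ (base e).up) (𝟙 a₀) := ⟨inferInstance, ha, by simp⟩
  exact (hF.isIsoLift_unique _ (isIsoLift_chosenLift hF ha _) hid).1

end YObj

open YObj in
theorem stmt5_general {G : Type u} [Groupoid.{v} G] (e : G)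
    {Y : Type u'} [Category.{v'} Y] (F : Y ⥤ G) (hF : Constructive F) :
    Function.Bijective
      (fun Φ : {Φ : YObj e ⥤ Y // Φ ⋙ F = FGe e} =>
        (⟨Φ.1.obj ⟨e, 𝟙 e⟩,
          congrArg (fun (H : YObj e ⥤ G) => H.obj ⟨e, 𝟙 e⟩) Φ.2⟩ :
          {a : Y // F.obj a = e})) := by
  have hF := hF.uniqueIsoLifting
  refine ⟨fun ⟨Φ, hΦ⟩ ⟨Ψ, hΨ⟩ hΦΨ => ?_, fun ⟨a₀, ha⟩ => ?_⟩
  · exact Subtype.ext (eq_of_obj_base_eq hF hΦ hΨ (congrArg Subtype.val hΦΨ))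
  · exact ⟨⟨liftFunctor hF ha, liftFunctor_comp_eq hF ha⟩,
      Subtype.ext (liftFunctor_obj_base hF ha)⟩

/-- For a constructive functor `F : Y ⥤ G` on a connected groupoid `G`, the evaluation map
`Φ ↦ Φ((e, id_e))`, from morphisms of constructive functors `F_{G,e} → F` (functors over
`G`) to the fiber `F⁻¹(e)`, is a bijection. -/
theorem stmt5 {G : Type u} [Groupoid.{v} G] [IsConnected G] (e : G)
    {Y : Type u'} [Category.{v'} Y] (F : Y ⥤ G) (hF : Constructive F) :
    Function.Bijective
      (fun Φ : {Φ : YObj e ⥤ Y // Φ ⋙ F = FGe e} =>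
        (⟨Φ.1.obj ⟨e, 𝟙 e⟩,
          congrArg (fun (H : YObj e ⥤ G) => H.obj ⟨e, 𝟙 e⟩) Φ.2⟩ :
          {a : Y // F.obj a = e})) :=
  stmt5_general e F hF
end

section
/- Let G be a connected groupoid, e an object of G, and F : Y → G a constructive functor with Y a connected groupoid. Then any morphism of constructive functors Φ : F → F_{G,e} (i.e., a functor Φ : Y → Y_{G,e} over G) is an equivalence of categories; in particular, every endomorphism of F_{G,e} over G is an isomorphism. -/
open CategoryTheory

universe v u v' u'

/-! `Y_{G,e}` is indiscrete: between two objects `(a, u)` and `(a', u')` there is exactly one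
morphism, namely `u⁻¹ ≫ u'`. Hence a functor `Φ : Y ⥤ Y_{G,e}` out of a connected groupoid is
automatically full, and it is faithful because `Φ ⋙ F_{G,e}` is. Uniqueness of lifts along the
constructive functor `Φ ⋙ F_{G,e}` makes `Φ` injective on objects (an arrow mapped to an identity
is an identity), and existence of lifts makes it surjective. A fully faithful functor bijective
on objects has a strict inverse. Applied to `Y = Y_{G,e}` this inverts every endomorphism of
`F_{G,e}`. -/

namespace YObj

variable {G : Type u} [Groupoid.{v} G] {e : G}

lemma ext {p q : YObj e} (h : p.pt = q.pt) (h_up : p.up ≫ eqToHom h = q.up) : p = q := by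
  cases p; cases q
  cases h
  simp only [eqToHom_refl, Category.comp_id] at h_up
  rw [h_up]

lemma hom_val_eq {p q : YObj e} (f : p ⟶ q) : f.1 = Groupoid.inv p.up ≫ q.up := by
  rw [Groupoid.inv_eq_inv, IsIso.eq_inv_comp]
  exact f.2

def hom (p q : YObj e) : p ⟶ q :=
  ⟨Groupoid.inv p.up ≫ q.up, by simp⟩

instance : Quiver.IsThin (YObj e) :=
  fun _ _ => ⟨fun f g => Subtype.ext ((hom_val_eq f).trans (hom_val_eq g).symm)⟩

instance inst_s6 : Groupoid.{v} (YObj e) where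
  inv {p q} _ := hom q p
  inv_comp _ := Subsingleton.elim _ _
  comp_inv _ := Subsingleton.elim _ _

instance : IsConnected (YObj e) :=
  have : Nonempty (YObj e) := ⟨⟨e, 𝟙 e⟩⟩
  zigzag_isConnected fun p q => Zigzag.of_hom (hom p q)

end YObj

lemma constructive_FGe {G : Type u} [Groupoid.{v} G] (e : G) : Constructive (FGe e) := by
  refine ⟨⟨fun h => Subtype.ext h⟩, fun p x u _ => ?_⟩
  refine ⟨⟨⟨x, p.up ≫ u⟩, ⟨u, rfl⟩⟩, ⟨inferInstance, rfl, (Category.comp_id u).symm⟩, ?_⟩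
  rintro ⟨⟨b, w⟩, v⟩ ⟨-, h, hv⟩
  change b = x at h
  subst h
  have hvu : v.1 = u := hv.trans (Category.comp_id u)
  obtain rfl : w = p.up ≫ u := by rw [← hvu]; exact v.2.symm
  exact congrArg _ (Subtype.ext hvu)

lemma Constructive.eq_of_map_eq_eqToHom {Y X : Type*} [Category Y] [Category X] {F : Y ⥤ X}
    (hF : Constructive F) {a b : Y} (q : a ⟶ b) [IsIso q] (h : F.obj a = F.obj b)
    (hq : F.map q = eqToHom h) : a = b := by
  have hlift := (hF.2 a (F.obj a) (𝟙 _) inferInstance).unique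
    (y₁ := ⟨a, 𝟙 a⟩) (y₂ := ⟨b, q⟩)
    ⟨inferInstance, rfl, by simp⟩ ⟨inferInstance, h.symm, by simp [hq]⟩
  exact congrArg Sigma.fst hlift

namespace CategoryTheory.Functor

lemma exists_inverse_of_bijective_obj {C D : Type*} [Category C] [Category D] (Φ : C ⥤ D)
    [Φ.Full] [Φ.Faithful] (hΦ : Function.Bijective Φ.obj) :
    ∃ Φ' : D ⥤ C, Φ ⋙ Φ' = 𝟭 C ∧ Φ' ⋙ Φ = 𝟭 D := by
  let g := Function.surjInv hΦ.2
  have hg : ∀ d, Φ.obj (g d) = d := Function.surjInv_eq hΦ.2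
  let Φ' : D ⥤ C :=
    { obj := g
      map := fun {p q} f => Φ.preimage (eqToHom (hg p) ≫ f ≫ eqToHom (hg q).symm)
      map_id := fun p => Φ.map_injective (by simp)
      map_comp := fun f f' => Φ.map_injective (by simp) }
  refine ⟨Φ', Functor.ext (Function.leftInverse_surjInv hΦ) fun a b f => ?_,
    Functor.ext hg fun p q f => ?_⟩
  · exact Φ.map_injective (by simp [Φ', eqToHom_map])
  · simp [Φ']

variable {C D : Type*} [Groupoid C] [IsPreconnected C] [Category D] [Quiver.IsThin D]

lemma full_of_isThin (Φ : C ⥤ D) : Φ.Full :=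
  ⟨fun {y y'} _ => ⟨(nonempty_hom_of_preconnected_groupoid y y').some, Subsingleton.elim _ _⟩⟩

lemma injective_obj_of_constructive_comp {X : Type*} [Category X] {Φ : C ⥤ D} {F : D ⥤ X}
    (hF : Constructive (Φ ⋙ F)) : Function.Injective Φ.obj := by
  intro b b' h
  obtain ⟨q⟩ := nonempty_hom_of_preconnected_groupoid b b'
  have hq : Φ.map q = eqToHom h := Subsingleton.elim _ _
  exact hF.eq_of_map_eq_eqToHom q (congrArg F.obj h) (by simp [hq, eqToHom_map])

end CategoryTheory.Functor

section OverFGe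

variable {G : Type u} [Groupoid.{v} G] {e : G} {Y : Type u'} [Groupoid.{v'} Y] {Φ : Y ⥤ YObj e}

lemma surjective_obj_of_constructive_comp_FGe [Nonempty Y] (hF : Constructive (Φ ⋙ FGe e)) :
    Function.Surjective Φ.obj := by
  intro p
  let y := Classical.arbitrary Y
  obtain ⟨⟨b, q⟩, ⟨-, h, hq⟩, -⟩ :=
    hF.2 y p.pt (YObj.hom (Φ.obj y) p).1 (IsIso.of_groupoid _)
  change (Φ.obj b).pt = p.pt at h
  change (Φ.map q).1 = (YObj.hom (Φ.obj y) p).1 ≫ eqToHom h.symm at hq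
  refine ⟨b, YObj.ext h ?_⟩
  rw [← (Φ.map q).2, hq]
  simp [YObj.hom]

lemma exists_inverse_of_constructive_comp_FGe [IsConnected Y] (hF : Constructive (Φ ⋙ FGe e)) :
    ∃ Φ' : YObj e ⥤ Y, Φ ⋙ Φ' = 𝟭 Y ∧ Φ' ⋙ Φ = 𝟭 (YObj e) :=
  have := Φ.full_of_isThin
  have := hF.1
  have : Φ.Faithful := Functor.Faithful.of_comp Φ (FGe e)
  Φ.exists_inverse_of_bijective_obj
    ⟨Functor.injective_obj_of_constructive_comp hF, surjective_obj_of_constructive_comp_FGe hF⟩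

end OverFGe

theorem stmt6_general {G : Type u} [Groupoid.{v} G] (e : G)
    {Y : Type u'} [Groupoid.{v'} Y] [IsConnected Y]
    (F : Y ⥤ G) (hF : Constructive F)
    (Φ : Y ⥤ YObj e) (hΦ : Φ ⋙ FGe e = F) :
    Φ.IsEquivalence ∧
      ∀ (Ψ : YObj e ⥤ YObj e), Ψ ⋙ FGe e = FGe e →
        ∃ Ψ' : YObj e ⥤ YObj e, Ψ' ⋙ FGe e = FGe e ∧
          Ψ ⋙ Ψ' = 𝟭 (YObj e) ∧ Ψ' ⋙ Ψ = 𝟭 (YObj e) := by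
  subst hΦ
  obtain ⟨Φ', hΦΦ', hΦ'Φ⟩ := exists_inverse_of_constructive_comp_FGe hF
  have hequiv : Φ.IsEquivalence :=
    (CategoryTheory.Equivalence.mk Φ Φ' (eqToIso hΦΦ'.symm) (eqToIso hΦ'Φ)).isEquivalence_functor
  refine ⟨hequiv, fun Ψ hΨ => ?_⟩
  obtain ⟨Ψ', hΨΨ', hΨ'Ψ⟩ := exists_inverse_of_constructive_comp_FGe (hΨ ▸ constructive_FGe e)
  refine ⟨Ψ', ?_, hΨΨ', hΨ'Ψ⟩
  calc Ψ' ⋙ FGe e = (Ψ' ⋙ Ψ) ⋙ FGe e := by rw [Functor.assoc, hΨ]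
    _ = FGe e := by rw [hΨ'Ψ, Functor.id_comp]

/-- Let `F : Y ⥤ G` be a constructive functor on a connected groupoid `G`, with `Y` a
connected groupoid. Then any morphism of constructive functors `Φ : F → F_{G,e}` is an
equivalence of categories; in particular every endomorphism of `F_{G,e}` over `G` is an
isomorphism (has a strict inverse over `G`). -/
theorem stmt6 {G : Type u} [Groupoid.{v} G] [IsConnected G] (e : G)
    {Y : Type u'} [Groupoid.{v'} Y] [IsConnected Y]
    (F : Y ⥤ G) (hF : Constructive F)
    (Φ : Y ⥤ YObj e) (hΦ : Φ ⋙ FGe e = F) :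
    Φ.IsEquivalence ∧
      ∀ (Ψ : YObj e ⥤ YObj e), Ψ ⋙ FGe e = FGe e →
        ∃ Ψ' : YObj e ⥤ YObj e, Ψ' ⋙ FGe e = FGe e ∧
          Ψ ⋙ Ψ' = 𝟭 (YObj e) ∧ Ψ' ⋙ Ψ = 𝟭 (YObj e) :=
  stmt6_general e F hF Φ hΦ
end

section
/- Let G be a connected groupoid, e an object of G, and F : Y → G a constructive functor with Y nonempty. Then any monomorphism Φ : F → F_{G,e} in the category of constructive functors over G is an isomorphism. -/
open CategoryTheory

universe v u v' u'

lemma YObj.hom_ext {G : Type u} [Groupoid.{v} G] {e : G} {p q : YObj e}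
    (f g : p ⟶ q) : f = g := by
  apply Subtype.ext
  have h1 : p.up ≫ f.1 = p.up ≫ g.1 := f.2.trans g.2.symm
  exact (cancel_epi p.up).mp h1

lemma YObj.obj_ext {G : Type u} [Groupoid.{v} G] {e : G} {p q : YObj e}
    (h : p.pt = q.pt) (h2 : p.up ≫ eqToHom h = q.up) : p = q := by
  cases p; cases q
  dsimp at h
  subst h
  simpa using h2

/-- Let `F : Y ⥤ G` be a constructive functor on a connected groupoid `G` with `Y`
nonempty.  Any monomorphism `Φ : F → F_{G,e}` in the category of constructive functors
over `G` (composition with `Φ` is injective on morphisms from any constructive functor)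
is an isomorphism. -/
theorem stmt9 {G : Type u} [Groupoid.{v} G] [IsConnected G] (e : G)
    {Y : Type (max u v)} [Category.{v} Y] (F : Y ⥤ G) (hF : Constructive F)
    (hY : Nonempty Y)
    (Φ : Y ⥤ YObj e) (hΦ : Φ ⋙ FGe e = F)
    (hmono : ∀ (Z : Type (max u v)) [Category.{v} Z] (F₂ : Z ⥤ G),
      Constructive F₂ → ∀ (Ψ₁ Ψ₂ : Z ⥤ Y), Ψ₁ ⋙ F = F₂ → Ψ₂ ⋙ F = F₂ →
        Ψ₁ ⋙ Φ = Ψ₂ ⋙ Φ → Ψ₁ = Ψ₂) :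
    ∃ Ψ : YObj e ⥤ Y, Ψ ⋙ F = FGe e ∧ Φ ⋙ Ψ = 𝟭 Y ∧ Ψ ⋙ Φ = 𝟭 (YObj e) := by
  classical
  obtain ⟨a₀⟩ := hY
  have h₀ : (Φ.obj a₀).pt = F.obj a₀ := Functor.congr_obj hΦ a₀
  set u₀ : e ⟶ (Φ.obj a₀).pt := (Φ.obj a₀).up with hu₀
  have hv : ∀ q : YObj e, IsIso (eqToHom h₀.symm ≫ Groupoid.inv u₀ ≫ q.up) :=
    fun q => inferInstance
  let L : ∀ q : YObj e, Σ b : Y, a₀ ⟶ b := fun q =>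
    (hF.2 a₀ q.pt (eqToHom h₀.symm ≫ Groupoid.inv u₀ ≫ q.up) (hv q)).choose
  have hL : ∀ q, IsIso (L q).2 ∧ ∃ h : F.obj (L q).1 = q.pt,
      F.map (L q).2 = (eqToHom h₀.symm ≫ Groupoid.inv u₀ ≫ q.up) ≫ eqToHom h.symm :=
    fun q => (hF.2 a₀ q.pt (eqToHom h₀.symm ≫ Groupoid.inv u₀ ≫ q.up) (hv q)).choose_spec.1
  have hiso : ∀ q, IsIso (L q).2 := fun q => (hL q).1
  have hob : ∀ q, F.obj (L q).1 = q.pt := fun q => (hL q).2.choose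
  have hmap : ∀ q, F.map (L q).2
      = (eqToHom h₀.symm ≫ Groupoid.inv u₀ ≫ q.up) ≫ eqToHom (hob q).symm :=
    fun q => (hL q).2.choose_spec
  let Ψ : YObj e ⥤ Y :=
    { obj := fun q => (L q).1
      map := fun {q q'} _ =>
        letI := hiso q
        CategoryTheory.inv (L q).2 ≫ (L q').2
      map_id := fun q => by
        letI := hiso q
        simp
      map_comp := fun {q q' q''} f g => by
        letI := hiso q; letI := hiso q'
        simp }
  have hΨmap : ∀ {q q' : YObj e} (f : q ⟶ q'),
      Ψ.map f = letI := hiso q; CategoryTheory.inv (L q).2 ≫ (L q').2 := fun _ => rfl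
  have hFΨ : ∀ {q q' : YObj e} (f : q ⟶ q'),
      F.map (Ψ.map f) = eqToHom (hob q) ≫ f.1 ≫ eqToHom (hob q').symm := by
    intro q q' f
    letI := hiso q
    obtain ⟨fv, hfv⟩ := f
    have hf : fv = Groupoid.inv q.up ≫ q'.up := by
      rw [← hfv]; simp
    have h1 : inv (F.map (L q).snd)
        = eqToHom (hob q) ≫ Groupoid.inv q.up ≫ u₀ ≫ eqToHom h₀ := by
      apply IsIso.inv_eq_of_hom_inv_id
      rw [hmap q]
      simp [Groupoid.inv_eq_inv]
    rw [hΨmap, F.map_comp, F.map_inv, h1, hmap q']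
    simp [Groupoid.inv_eq_inv, hf]
  have hΨF : Ψ ⋙ F = FGe e := by
    exact CategoryTheory.Functor.ext hob (fun q q' f => hFΨ f)
  have hΦobj : ∀ q : YObj e, Φ.obj ((L q).1) = q := by
    intro q
    have hpt : (Φ.obj ((L q).1)).pt = F.obj ((L q).1) := Functor.congr_obj hΦ ((L q).1)
    refine YObj.obj_ext (hpt.trans (hob q)) ?_
    have hup : u₀ ≫ (Φ.map (L q).2).1 = (Φ.obj ((L q).1)).up := (Φ.map (L q).2).2
    have hmv : (Φ.map (L q).2).1 = eqToHom h₀ ≫ F.map (L q).2 ≫ eqToHom hpt.symm := by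
      have := Functor.congr_hom hΦ (L q).2
      exact this
    rw [← hup, hmv, hmap q]
    simp
  have hΨΦ : Ψ ⋙ Φ = 𝟭 (YObj e) := by
    exact CategoryTheory.Functor.ext hΦobj (fun q q' f => YObj.hom_ext _ _)
  have hΦΨ : Φ ⋙ Ψ = 𝟭 Y := by
    apply hmono Y F hF (Φ ⋙ Ψ) (𝟭 Y)
    · show Φ ⋙ (Ψ ⋙ F) = F
      rw [hΨF, hΦ]
    · exact Functor.id_comp F
    · show Φ ⋙ (Ψ ⋙ Φ) = 𝟭 Y ⋙ Φ
      rw [hΨΦ, Functor.comp_id, Functor.id_comp]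
  exact ⟨Ψ, hΨF, hΦΨ, hΨΦ⟩
end

section
/- Let X be a category, G a connected groupoid in X (a subcategory which is a groupoid, closed under isomorphisms of X between its objects, and connected), and ι_G : G ↪ X the inclusion. Then the functor ι_{G*} : Con_G → Con_X, sending a constructive functor F : Y → G to ι_G ∘ F : Y → X, is well-defined (ι_G ∘ F is again constructive) and fully faithful. -/
open CategoryTheory

universe v u v' u' v'' u'' w w'

/-- Let `G` be a connected groupoid in `X`, given by an inclusion `ι : G ⥤ X` which is
fully faithful, injective on objects, and closed under isomorphisms of `X` between its
objects.  Then postcomposition with `ι` sends constructive functors on `G` to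
constructive functors on `X`, and the resulting functor `ι_{G*} : Con_G ⥤ Con_X` is
fully faithful. -/
theorem stmt11 {G : Type u''} {X : Type u} [Groupoid.{v''} G] [Category.{v} X]
    [IsConnected G] (ι : G ⥤ X) (hful : ι.Full) (hfai : ι.Faithful)
    (hinj : Function.Injective ι.obj)
    (hclosed : ∀ (g : G) (x : X), Nonempty (ι.obj g ≅ x) → ∃ g', ι.obj g' = x)
    {Y : Type u'} {Y' : Type w} [Category.{v'} Y] [Category.{w'} Y']
    (F : Y ⥤ G) (hF : Constructive F) (F' : Y' ⥤ G) (hF' : Constructive F') :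
    Constructive (F ⋙ ι) ∧
      Function.Bijective
        (fun Φ : {Φ : Y ⥤ Y' // Φ ⋙ F' = F} =>
          (⟨Φ.1, by rw [← Functor.assoc, Φ.2]⟩ :
            {Φ : Y ⥤ Y' // Φ ⋙ (F' ⋙ ι) = F ⋙ ι})) := by
  constructor
  · constructor
    · exact ⟨fun h => hF.1.map_injective (hfai.map_injective h)⟩
    · intro a x u hu
      obtain ⟨g', hg'⟩ := hclosed (F.obj a) x ⟨asIso u⟩
      obtain ⟨v, hv⟩ := hful.map_surjective (u ≫ eqToHom hg'.symm)
      have hviso : IsIso v := inferInstance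
      obtain ⟨p, ⟨hp1, hp2, hp3⟩, hpu⟩ := hF.2 a g' v hviso
      refine ⟨p, ⟨hp1, ?_, ?_⟩, ?_⟩
      · exact (congrArg ι.obj hp2).trans hg'
      · show ι.map (F.map p.2) = _
        rw [hp3, ι.map_comp, hv, eqToHom_map, Category.assoc, eqToHom_trans]
      · rintro q ⟨hq1, hq2, hq3⟩
        refine hpu q ⟨hq1, hinj (hq2.trans hg'.symm), ?_⟩
        apply hfai.map_injective
        rw [ι.map_comp, hv, eqToHom_map, Category.assoc, eqToHom_trans]
        exact hq3
  · constructor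
    · intro a b h
      simpa [Subtype.ext_iff] using h
    · rintro ⟨Φ, h⟩
      have h' : (Φ ⋙ F') ⋙ ι = F ⋙ ι := by rw [Functor.assoc]; exact h
      have hobj : ∀ y, (Φ ⋙ F').obj y = F.obj y :=
        fun y => hinj (Functor.congr_obj h' y)
      have hΦ : Φ ⋙ F' = F := by
        refine CategoryTheory.Functor.ext hobj (fun a b f => ?_)
        apply hfai.map_injective
        have := Functor.congr_hom h' f
        simp only [Functor.comp_map] at this
        rw [ι.map_comp, ι.map_comp, eqToHom_map, eqToHom_map]
        exact this
      exact ⟨⟨Φ, hΦ⟩, rfl⟩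
end
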